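/- arXiv:1901.04064 — 2 statements merged into one kernel-verified Lean document; each statement's English description precedes it below -/
import Mathlib

section
/- Let N be an orchard network and let {a, b} be a cherry or a reticulated cherry of N. If N' is obtained from N by reducing b (when {a,b} is a cherry) or by cutting {a,b} (when {a,b} is a reticulated cherry with b the reticulation leaf), then N' is an orchard network. -/
/-- A finite directed graph on natural-number vertices, with no parallel arcs
(arcs form a `Finset` of ordered pairs). -/
structure Digraph' where
  V : Finset ℕ
  A : Finset (ℕ × ℕ)
  mem_V : ∀ e ∈ A, e.1 ∈ V ∧ e.2 ∈ V

namespace Digraph'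

def inDeg (N : Digraph') (v : ℕ) : ℕ := (N.A.filter (fun e => e.2 = v)).card

def outDeg (N : Digraph') (v : ℕ) : ℕ := (N.A.filter (fun e => e.1 = v)).card

/-- Reachability by a directed path (including paths of length 0). -/
def Reach (N : Digraph') : ℕ → ℕ → Prop :=
  Relation.ReflTransGen (fun u v => (u, v) ∈ N.A)

def Acyclic (N : Digraph') : Prop := ∀ u v, (u, v) ∈ N.A → ¬ N.Reach v u

def IsLeaf (N : Digraph') (v : ℕ) : Prop := v ∈ N.V ∧ N.outDeg v = 0

def IsTreeVertex (N : Digraph') (v : ℕ) : Prop :=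
  v ∈ N.V ∧ N.inDeg v = 1 ∧ N.outDeg v = 2

def IsRet (N : Digraph') (v : ℕ) : Prop :=
  v ∈ N.V ∧ N.inDeg v = 2 ∧ N.outDeg v = 1

/-- `N` is a (binary) phylogenetic network on leaf set `X`. -/
structure IsPhylo (N : Digraph') (X : Finset ℕ) : Prop where
  acyclic : N.Acyclic
  X_sub : X ⊆ N.V
  leafSet : ∀ v ∈ N.V, (N.outDeg v = 0 ↔ v ∈ X)
  root : ∃ ρ ∈ N.V, N.inDeg ρ = 0 ∧ N.outDeg ρ = 2 ∧ ∀ v ∈ N.V, N.Reach ρ v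
  degrees : ∀ v ∈ N.V,
    (N.inDeg v = 0 ∧ N.outDeg v = 2) ∨ (N.inDeg v = 1 ∧ N.outDeg v = 0) ∨
    (N.inDeg v = 1 ∧ N.outDeg v = 2) ∨ (N.inDeg v = 2 ∧ N.outDeg v = 1)

/-- The degenerate single-vertex network. -/
def IsSingle (N : Digraph') : Prop := ∃ x, N.V = {x} ∧ N.A = ∅

/-- `{a, b}` is a cherry: two distinct leaves with a common parent. -/
def IsCherry (N : Digraph') (a b : ℕ) : Prop :=
  a ≠ b ∧ N.IsLeaf a ∧ N.IsLeaf b ∧ ∃ p, (p, a) ∈ N.A ∧ (p, b) ∈ N.A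

/-- `{a, b}` is a reticulated cherry with `b` the reticulation leaf. -/
def IsRetCherry (N : Digraph') (a b : ℕ) : Prop :=
  a ≠ b ∧ N.IsLeaf a ∧ N.IsLeaf b ∧
  ∃ pa pb, (pa, a) ∈ N.A ∧ (pb, b) ∈ N.A ∧ N.inDeg pb = 2 ∧ (pa, pb) ∈ N.A

/-- `N'` is obtained from `N` by reducing the leaf `b` of the cherry `{a, b}`:
delete `b` and suppress the resulting in-degree-1 out-degree-1 vertex
(if the common parent is the root, delete `b` and the root, leaving the single
vertex `a`). -/
def ReduceCherry (N N' : Digraph') (a b : ℕ) : Prop :=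
  N.IsCherry a b ∧ ∃ p, (p, a) ∈ N.A ∧ (p, b) ∈ N.A ∧
    ((N.inDeg p = 0 ∧ N'.V = {a} ∧ N'.A = ∅) ∨
     (∃ u, (u, p) ∈ N.A ∧ N'.V = (N.V.erase b).erase p ∧
        N'.A = insert (u, a) (((N.A.erase (u, p)).erase (p, a)).erase (p, b))))

/-- `N'` is obtained from `N` by cutting the reticulated cherry `{a, b}` with `b`
the reticulation leaf: delete the reticulation arc from the parent of `a` to the
parent of `b`, and suppress the two resulting in-degree-1 out-degree-1 vertices. -/
def CutRetCherry (N N' : Digraph') (a b : ℕ) : Prop :=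
  N.IsRetCherry a b ∧ ∃ pa pb ua q,
    (pa, a) ∈ N.A ∧ (pb, b) ∈ N.A ∧ N.inDeg pb = 2 ∧ (pa, pb) ∈ N.A ∧
    (ua, pa) ∈ N.A ∧ (q, pb) ∈ N.A ∧ q ≠ pa ∧
    N'.V = (N.V.erase pa).erase pb ∧
    N'.A = insert (ua, a) (insert (q, b)
      (((((N.A.erase (pa, pb)).erase (ua, pa)).erase (pa, a)).erase (q, pb)).erase (pb, b)))

/-- A single cherry reduction. -/
def CherryStep (N N' : Digraph') : Prop :=
  ∃ a b, ReduceCherry N N' a b ∨ CutRetCherry N N' a b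

/-- `N` is an orchard network: some sequence of cherry reductions reduces it to a
single vertex. -/
def IsOrchard (N : Digraph') : Prop :=
  ∃ N', Relation.ReflTransGen CherryStep N N' ∧ IsSingle N'

/-- The ancestral set `γ(x)`: the non-leaf vertices from which `x` is reachable. -/
def gamma (N : Digraph') (x : ℕ) : Set ℕ :=
  {v | v ∈ N.V ∧ N.outDeg v ≠ 0 ∧ N.Reach v x}

/-- The number of directed paths in `N` from `u` to `x` (a path is recorded as the
list of its vertices; the single-vertex path counts when `u = x`). -/
noncomputable def numPaths (N : Digraph') (u x : ℕ) : ℕ :=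
  Set.ncard {l : List ℕ | l.head? = some u ∧ l.getLast? = some x ∧
    l.Chain' (fun p q => (p, q) ∈ N.A)}

/-- Tree-sibling: every reticulation has a parent that is also the parent of a
tree vertex or a leaf. -/
def TreeSibling (N : Digraph') : Prop :=
  ∀ v ∈ N.V, N.inDeg v = 2 → ∃ p w, (p, v) ∈ N.A ∧ (p, w) ∈ N.A ∧ w ≠ v ∧
    (N.IsTreeVertex w ∨ N.IsLeaf w)

/-- Time-consistent: there is a temporal labelling of the vertices. -/
def TimeConsistent (N : Digraph') : Prop :=
  ∃ t : ℕ → ℕ, ∀ u v, (u, v) ∈ N.A →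
    (N.inDeg v = 2 → t u = t v) ∧ (N.inDeg v ≠ 2 → t u < t v)

/-- Tree-child: every non-leaf vertex has a child that is a tree vertex or a leaf
(equivalently, a child of in-degree one). -/
def TreeChild (N : Digraph') : Prop :=
  ∀ v ∈ N.V, N.outDeg v ≠ 0 → ∃ w, (v, w) ∈ N.A ∧ N.inDeg w = 1

end Digraph'

/-!
Induction along a cherry-picking sequence `N → N₁ → ⋯` ending in a single vertex. Both kinds of
reduction are local patches: they delete two vertices and a few arcs of a small configuration and
add one or two arcs, and every vertex that survives keeps its in- and out-degree, so the degrees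
of a binary network persist along the sequence. Compare the first step `N → N₁` with the given
reduction `N → N'`. If the first step picks a cherry below a root, that cherry is still there in
`N'`, which therefore reduces to a single vertex. Otherwise the two reductions are the same up to
exchanging the two leaves of a cherry (then `N'` is a relabelling of `N₁`), or they cut two
reticulated cherries with the same reticulation leaf `b` (then `b` sits in an ordinary cherry in
both `N₁` and `N'`, and reducing it gives the same network), or their configurations are
independent and the two reductions commute. In the last two cases `N'` reduces in one step to a
network obtained from `N₁` by one reduction, which is orchard by induction.
-/

theorem Finset.card_filter_sdiff_union_add {α : Type*} [DecidableEq α] (P : α → Prop)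
    [DecidablePred P] {s D I : Finset α} (hD : D ⊆ s) (hI : Disjoint s I) :
    ((s \ D ∪ I).filter P).card + (D.filter P).card = (s.filter P).card + (I.filter P).card := by
  have hsub : D.filter P ⊆ s.filter P := Finset.filter_subset_filter P hD
  have hdisj : Disjoint (s.filter P \ D.filter P) (I.filter P) :=
    Finset.disjoint_of_subset_left (Finset.sdiff_subset.trans (Finset.filter_subset _ _))
      (Finset.disjoint_of_subset_right (Finset.filter_subset _ _) hI)
  have hsplit : (s \ D ∪ I).filter P = (s.filter P \ D.filter P) ∪ I.filter P := by
    ext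
    simp only [Finset.mem_filter, Finset.mem_union, Finset.mem_sdiff]
    tauto
  rw [hsplit, Finset.card_union_of_disjoint hdisj, Finset.card_sdiff_of_subset hsub]
  have := Finset.card_le_card hsub
  omega

namespace Digraph'

attribute [ext] Digraph'

variable {N : Digraph'}

lemma outDeg_eq_zero_iff {v : ℕ} : N.outDeg v = 0 ↔ ∀ w, (v, w) ∉ N.A := by
  simp only [outDeg, Finset.card_eq_zero, Finset.filter_eq_empty_iff, Prod.forall]
  exact ⟨fun h w hw => h v w hw rfl, fun h _ w hw hv => h w (hv ▸ hw)⟩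

lemma inDeg_eq_zero_iff {v : ℕ} : N.inDeg v = 0 ↔ ∀ u, (u, v) ∉ N.A := by
  simp only [inDeg, Finset.card_eq_zero, Finset.filter_eq_empty_iff, Prod.forall]
  exact ⟨fun h u hu => h u v hu rfl, fun h u _ hu hv => h u (hv ▸ hu)⟩

lemma eq_of_inDeg_le_one {u u' v : ℕ} (h : N.inDeg v ≤ 1) (hu : (u, v) ∈ N.A)
    (hu' : (u', v) ∈ N.A) : u = u' :=
  congrArg Prod.fst (Finset.card_le_one.1 h _ (Finset.mem_filter.2 ⟨hu, rfl⟩) _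
    (Finset.mem_filter.2 ⟨hu', rfl⟩))

lemma eq_of_outDeg_le_one {v w w' : ℕ} (h : N.outDeg v ≤ 1) (hw : (v, w) ∈ N.A)
    (hw' : (v, w') ∈ N.A) : w = w' :=
  congrArg Prod.snd (Finset.card_le_one.1 h _ (Finset.mem_filter.2 ⟨hw, rfl⟩) _
    (Finset.mem_filter.2 ⟨hw', rfl⟩))

lemma eq_or_eq_of_inDeg_le_two {u u₁ u₂ v : ℕ} (h : N.inDeg v ≤ 2) (h₁ : (u₁, v) ∈ N.A)
    (h₂ : (u₂, v) ∈ N.A) (hne : u₁ ≠ u₂) (hu : (u, v) ∈ N.A) : u = u₁ ∨ u = u₂ := by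
  by_contra! hc
  refine h.not_gt (Finset.two_lt_card.2 ⟨(u₁, v), ?_, (u₂, v), ?_, (u, v), ?_, ?_, ?_, ?_⟩) <;>
    simp [*, Ne.symm hc.1, Ne.symm hc.2]

lemma eq_or_eq_of_outDeg_le_two {v w w₁ w₂ : ℕ} (h : N.outDeg v ≤ 2) (h₁ : (v, w₁) ∈ N.A)
    (h₂ : (v, w₂) ∈ N.A) (hne : w₁ ≠ w₂) (hw : (v, w) ∈ N.A) : w = w₁ ∨ w = w₂ := by
  by_contra! hc
  refine h.not_gt (Finset.two_lt_card.2 ⟨(v, w₁), ?_, (v, w₂), ?_, (v, w), ?_, ?_, ?_, ?_⟩) <;>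
    simp [*, Ne.symm hc.1, Ne.symm hc.2]

lemma two_le_outDeg {v w₁ w₂ : ℕ} (h₁ : (v, w₁) ∈ N.A) (h₂ : (v, w₂) ∈ N.A) (hne : w₁ ≠ w₂) :
    2 ≤ N.outDeg v :=
  Finset.one_lt_card.2 ⟨(v, w₁), by simp [h₁], (v, w₂), by simp [h₂], by simp [hne]⟩

def BinaryDegrees (N : Digraph') : Prop :=
  ∀ v ∈ N.V,
    (N.inDeg v = 0 ∧ N.outDeg v = 2) ∨ (N.inDeg v = 1 ∧ N.outDeg v = 0) ∨
    (N.inDeg v = 1 ∧ N.outDeg v = 2) ∨ (N.inDeg v = 2 ∧ N.outDeg v = 1)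

namespace BinaryDegrees

variable (hN : N.BinaryDegrees) {v : ℕ} (hv : v ∈ N.V)
include hN hv

lemma inDeg_eq_one_of_outDeg_eq_zero (h : N.outDeg v = 0) : N.inDeg v = 1 := by
  rcases hN v hv with h' | h' | h' | h' <;> omega

lemma outDeg_le_two : N.outDeg v ≤ 2 := by
  rcases hN v hv with h' | h' | h' | h' <;> omega

lemma inDeg_le_one_of_two_le_outDeg (h : 2 ≤ N.outDeg v) : N.inDeg v ≤ 1 := by
  rcases hN v hv with h' | h' | h' | h' <;> omega

lemma outDeg_le_one_of_inDeg_eq_two (h : N.inDeg v = 2) : N.outDeg v ≤ 1 := by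
  rcases hN v hv with h' | h' | h' | h' <;> omega

end BinaryDegrees

section Relabel

variable (σ : ℕ ≃ ℕ)

def map (N : Digraph') : Digraph' where
  V := N.V.map σ.toEmbedding
  A := N.A.map (σ.prodCongr σ).toEmbedding
  mem_V e he := by
    rw [Finset.mem_map_equiv] at he
    simpa [Finset.mem_map_equiv] using N.mem_V _ he

variable {σ}

@[simp] lemma map_V : (N.map σ).V = N.V.map σ.toEmbedding := rfl

@[simp] lemma map_A : (N.map σ).A = N.A.map (σ.prodCongr σ).toEmbedding := rfl

@[simp] lemma map_outDeg (v : ℕ) : (N.map σ).outDeg (σ v) = N.outDeg v := by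
  simp only [outDeg, map_A, Finset.filter_map, Finset.card_map]
  congr 1
  ext e
  simp

@[simp] lemma map_inDeg (v : ℕ) : (N.map σ).inDeg (σ v) = N.inDeg v := by
  simp only [inDeg, map_A, Finset.filter_map, Finset.card_map]
  congr 1
  ext e
  simp

lemma map_refl : N.map (Equiv.refl ℕ) = N := by
  ext <;> simp

lemma IsLeaf.map {v : ℕ} (h : N.IsLeaf v) : (N.map σ).IsLeaf (σ v) :=
  ⟨by simpa using h.1, by simpa using h.2⟩

lemma ReduceCherry.map {N' : Digraph'} {a b : ℕ} (h : ReduceCherry N N' a b) :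
    ReduceCherry (N.map σ) (N'.map σ) (σ a) (σ b) := by
  obtain ⟨⟨hab, ha, hb, -⟩, p, hpa, hpb, ⟨hroot, hV, hA⟩ | ⟨u, hup, hV, hA⟩⟩ := h
  · refine ⟨⟨σ.injective.ne hab, ha.map, hb.map, σ p, by simpa, by simpa⟩, σ p, by simpa,
      by simpa, Or.inl ⟨by simpa using hroot, by simp [hV], by simp [hA]⟩⟩
  · refine ⟨⟨σ.injective.ne hab, ha.map, hb.map, σ p, by simpa, by simpa⟩, σ p, by simpa,
      by simpa, Or.inr ⟨σ u, by simpa, ?_, ?_⟩⟩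
    · simp only [map_V, hV, Finset.map_erase]
      rfl
    · simp only [map_A, hA, Finset.map_erase, Finset.map_insert]
      rfl

lemma CutRetCherry.map {N' : Digraph'} {a b : ℕ} (h : CutRetCherry N N' a b) :
    CutRetCherry (N.map σ) (N'.map σ) (σ a) (σ b) := by
  obtain ⟨⟨hab, ha, hb, -⟩, pa, pb, ua, q, h₁, h₂, hin, h₃, h₄, h₅, hq, hV, hA⟩ := h
  refine ⟨⟨σ.injective.ne hab, ha.map, hb.map, σ pa, σ pb, by simpa, by simpa, by simpa,
      by simpa⟩, σ pa, σ pb, σ ua, σ q, by simpa, by simpa, by simpa, by simpa, by simpa,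
    by simpa, σ.injective.ne hq, ?_, ?_⟩
  · simp only [map_V, hV, Finset.map_erase]
    rfl
  · simp only [map_A, hA, Finset.map_erase, Finset.map_insert]
    rfl

lemma CherryStep.map {N' : Digraph'} (h : CherryStep N N') :
    CherryStep (N.map σ) (N'.map σ) := by
  obtain ⟨a, b, h | h⟩ := h
  exacts [⟨σ a, σ b, Or.inl h.map⟩, ⟨σ a, σ b, Or.inr h.map⟩]

lemma IsOrchard.map (h : N.IsOrchard) : (N.map σ).IsOrchard := by
  obtain ⟨F, hF, x, hV, hA⟩ := h
  exact ⟨F.map σ, hF.lift _ fun _ _ h => h.map, σ x, by simp [hV], by simp [hA]⟩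

end Relabel

lemma IsOrchard.of_cherryStep {N' : Digraph'} (h : CherryStep N N') (h' : N'.IsOrchard) :
    N.IsOrchard :=
  let ⟨F, hF, hs⟩ := h'
  ⟨F, .head h hF, hs⟩

lemma IsSingle.isOrchard (h : IsSingle N) : N.IsOrchard :=
  ⟨N, .refl, h⟩

def IsRootCherry (N : Digraph') (a b p : ℕ) : Prop :=
  a ≠ b ∧ N.IsLeaf a ∧ N.IsLeaf b ∧ (p, a) ∈ N.A ∧ (p, b) ∈ N.A ∧ N.inDeg p = 0

lemma IsRootCherry.isOrchard {a b p : ℕ} (h : N.IsRootCherry a b p) : N.IsOrchard := by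
  obtain ⟨hab, ha, hb, hpa, hpb, hroot⟩ := h
  exact .of_cherryStep (N' := ⟨{a}, ∅, by simp⟩)
    ⟨a, b, Or.inl ⟨⟨hab, ha, hb, p, hpa, hpb⟩, p, hpa, hpb, Or.inl ⟨hroot, rfl, rfl⟩⟩⟩
    (IsSingle.isOrchard ⟨a, rfl, rfl⟩)

/-- A cherry-picking move together with its local configuration: `reduce a b p u` reduces the
leaf `b` of the cherry `{a, b}` with parent `p`, whose parent is `u`; `cut a b pa pb ua q` cuts
the reticulated cherry with leaves `a` below `pa` and `b` below the reticulation `pb`, where `ua`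
is the parent of `pa` and `q` the other parent of `pb`. -/
inductive Move
  | reduce (a b p u : ℕ)
  | cut (a b pa pb ua q : ℕ)

namespace Move

def delV : Move → Finset ℕ
  | reduce _ b p _ => {b, p}
  | cut _ _ pa pb _ _ => {pa, pb}

def delA : Move → Finset (ℕ × ℕ)
  | reduce a b p u => {(u, p), (p, a), (p, b)}
  | cut a b pa pb ua q => {(pa, pb), (ua, pa), (pa, a), (q, pb), (pb, b)}

def insA : Move → Finset (ℕ × ℕ)
  | reduce a _ _ u => {(u, a)}
  | cut a b _ _ ua q => {(ua, a), (q, b)}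

def support : Move → Finset ℕ
  | reduce a b p u => {a, b, p, u}
  | cut a b pa pb ua q => {a, b, pa, pb, ua, q}

def Applies (N : Digraph') : Move → Prop
  | reduce a b p u => a ≠ b ∧ N.IsLeaf a ∧ N.IsLeaf b ∧
      (u, p) ∈ N.A ∧ (p, a) ∈ N.A ∧ (p, b) ∈ N.A
  | cut a b pa pb ua q => a ≠ b ∧ N.IsLeaf a ∧ N.IsLeaf b ∧
      (pa, pb) ∈ N.A ∧ (ua, pa) ∈ N.A ∧ (pa, a) ∈ N.A ∧ (q, pb) ∈ N.A ∧ (pb, b) ∈ N.A ∧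
      N.inDeg pb = 2 ∧ q ≠ pa

/-- No arcs other than those of the move meet its leaves or the vertices it deletes. -/
def Isolated (N : Digraph') : Move → Prop
  | reduce a b p u => (∀ w, (a, w) ∉ N.A) ∧ (∀ w, (b, w) ∉ N.A) ∧
      (∀ x, (x, a) ∈ N.A → x = p) ∧ (∀ x, (x, b) ∈ N.A → x = p) ∧
      (∀ x, (p, x) ∈ N.A → x = a ∨ x = b) ∧ (∀ x, (x, p) ∈ N.A → x = u)
  | cut a b pa pb ua q => (∀ w, (a, w) ∉ N.A) ∧ (∀ w, (b, w) ∉ N.A) ∧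
      (∀ x, (x, a) ∈ N.A → x = pa) ∧ (∀ x, (x, b) ∈ N.A → x = pb) ∧
      (∀ x, (pa, x) ∈ N.A → x = a ∨ x = pb) ∧ (∀ x, (x, pa) ∈ N.A → x = ua) ∧
      (∀ x, (pb, x) ∈ N.A → x = b) ∧ (∀ x, (x, pb) ∈ N.A → x = pa ∨ x = q)

def Result (m : Move) (N N' : Digraph') : Prop :=
  N'.V = N.V \ m.delV ∧ N'.A = N.A \ m.delA ∪ m.insA

def Independent (m n : Move) : Prop :=
  Disjoint m.support n.delV ∧ Disjoint n.support m.delV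

variable {m n : Move} {N' N₁ : Digraph'}

lemma Independent.symm (h : m.Independent n) : n.Independent m :=
  ⟨h.2, h.1⟩

lemma fst_mem_delV_or_snd_mem_delV (m : Move) {e : ℕ × ℕ} (he : e ∈ m.delA) :
    e.1 ∈ m.delV ∨ e.2 ∈ m.delV := by
  cases m <;> simp only [delA, delV, Finset.mem_insert, Finset.mem_singleton] at he ⊢ <;>
    rcases he with rfl | rfl | rfl | rfl | rfl <;> simp

lemma mem_support_of_mem_delA (m : Move) {e : ℕ × ℕ} (he : e ∈ m.delA) :
    e.1 ∈ m.support ∧ e.2 ∈ m.support := by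
  cases m <;> simp only [delA, support, Finset.mem_insert, Finset.mem_singleton] at he ⊢ <;>
    rcases he with rfl | rfl | rfl | rfl | rfl <;> simp

lemma mem_support_of_mem_insA (m : Move) {e : ℕ × ℕ} (he : e ∈ m.insA) :
    e.1 ∈ m.support ∧ e.2 ∈ m.support := by
  cases m <;> simp only [insA, support, Finset.mem_insert, Finset.mem_singleton] at he ⊢ <;>
    rcases he with rfl | rfl <;> simp

lemma disjoint_insA_delA (h : Disjoint m.support n.delV) : Disjoint m.insA n.delA :=
  Finset.disjoint_left.2 fun _ he hd => (n.fst_mem_delV_or_snd_mem_delV hd).elim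
    (Finset.disjoint_left.1 h (m.mem_support_of_mem_insA he).1)
    (Finset.disjoint_left.1 h (m.mem_support_of_mem_insA he).2)

lemma Applies.delA_subset (hm : m.Applies N) : m.delA ⊆ N.A := by
  cases m with
  | reduce a b p u =>
    obtain ⟨-, -, -, hup, hpa, hpb⟩ := hm
    simp [delA, Finset.insert_subset_iff, *]
  | cut a b pa pb ua q =>
    obtain ⟨-, -, -, hpp, hup, hpa, hqp, hpb, -, -⟩ := hm
    simp [delA, Finset.insert_subset_iff, *]

lemma Applies.not_isSingle (hm : m.Applies N) : ¬ IsSingle N := fun ⟨_, _, hA⟩ => by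
  have h := hm.delA_subset
  cases m <;> simp [delA, hA] at h

lemma Applies.isolated (hN : N.BinaryDegrees) (hm : m.Applies N) : m.Isolated N := by
  have leaf {x : ℕ} (hx : N.IsLeaf x) : ∀ w, (x, w) ∉ N.A := outDeg_eq_zero_iff.1 hx.2
  have parent {x y z : ℕ} (hx : N.IsLeaf x) (hy : (y, x) ∈ N.A) (hz : (z, x) ∈ N.A) : z = y :=
    eq_of_inDeg_le_one (hN.inDeg_eq_one_of_outDeg_eq_zero hx.1 hx.2).le hz hy
  cases m with
  | reduce a b p u =>
    obtain ⟨hab, ha, hb, hup, hpa, hpb⟩ := hm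
    have hpV := (N.mem_V _ hpa).1
    exact ⟨leaf ha, leaf hb, fun _ => parent ha hpa, fun _ => parent hb hpb,
      fun _ => eq_or_eq_of_outDeg_le_two (hN.outDeg_le_two hpV) hpa hpb hab,
      fun _ hx => eq_of_inDeg_le_one
        (hN.inDeg_le_one_of_two_le_outDeg hpV (two_le_outDeg hpa hpb hab)) hx hup⟩
  | cut a b pa pb ua q =>
    obtain ⟨hab, ha, hb, hpp, hup, hpa, hqp, hpb, hin, hq⟩ := hm
    have hpaV := (N.mem_V _ hpa).1
    have hapb : a ≠ pb := fun h => leaf ha b (h ▸ hpb)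
    exact ⟨leaf ha, leaf hb, fun _ => parent ha hpa, fun _ => parent hb hpb,
      fun _ => eq_or_eq_of_outDeg_le_two (hN.outDeg_le_two hpaV) hpa hpp hapb,
      fun _ hx => eq_of_inDeg_le_one
        (hN.inDeg_le_one_of_two_le_outDeg hpaV (two_le_outDeg hpa hpp hapb)) hx hup,
      fun _ hx => eq_of_outDeg_le_one
        (hN.outDeg_le_one_of_inDeg_eq_two (N.mem_V _ hpb).1 hin) hx hpb,
      fun _ => eq_or_eq_of_inDeg_le_two hin.le hpp hqp (Ne.symm hq)⟩

lemma Applies.disjoint_A_insA (hN : N.BinaryDegrees) (hm : m.Applies N) :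
    Disjoint N.A m.insA := by
  have hi := hm.isolated hN
  cases m with
  | reduce a b p u =>
    obtain ⟨hab, ha, hb, hup, hpa, hpb⟩ := hm
    obtain ⟨la, lb, pa, pb, cp, pp⟩ := hi
    simp only [insA, Finset.disjoint_singleton_right]
    grind
  | cut a b pa pb ua q =>
    obtain ⟨hab, ha, hb, hpp, hup, hpa, hqp, hpb, hin, hq⟩ := hm
    obtain ⟨la, lb, pa', pb', cpa, ppa, cpb, ppb⟩ := hi
    simp only [insA, Finset.disjoint_insert_right, Finset.disjoint_singleton_right]
    constructor <;> grind

lemma Applies.card_filter_delA_eq (hN : N.BinaryDegrees) (hm : m.Applies N) {v : ℕ}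
    (hv : v ∉ m.delV) :
    (m.delA.filter (·.1 = v)).card = (m.insA.filter (·.1 = v)).card ∧
    (m.delA.filter (·.2 = v)).card = (m.insA.filter (·.2 = v)).card := by
  have hi := hm.isolated hN
  cases m with
  | reduce a b p u =>
    simp only [delV, Finset.mem_insert, Finset.mem_singleton, not_or] at hv
    constructor <;> simp [delA, insA, Finset.filter_insert, Finset.filter_singleton,
      Ne.symm hv.1, Ne.symm hv.2] <;> split_ifs <;> rfl
  | cut a b pa pb ua q =>
    obtain ⟨hab, -, -, -, -, hpa, -, -, -, -⟩ := hm
    obtain ⟨-, -, -, -, -, -, cpb, -⟩ := hi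
    have hpp : pa ≠ pb := fun h => hab (cpb a (h ▸ hpa))
    simp only [delV, Finset.mem_insert, Finset.mem_singleton, not_or] at hv
    constructor <;> simp [delA, insA, Finset.filter_insert, Finset.filter_singleton,
      Ne.symm hv.1, Ne.symm hv.2] <;> split_ifs <;> simp_all

lemma Result.outDeg_eq (hN : N.BinaryDegrees) (hm : m.Applies N) (hr : m.Result N N') {v : ℕ}
    (hv : v ∉ m.delV) : N'.outDeg v = N.outDeg v := by
  have h := Finset.card_filter_sdiff_union_add (·.1 = v) hm.delA_subset (hm.disjoint_A_insA hN)
  rw [(hm.card_filter_delA_eq hN hv).1] at h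
  simp only [outDeg, hr.2]
  omega

lemma Result.inDeg_eq (hN : N.BinaryDegrees) (hm : m.Applies N) (hr : m.Result N N') {v : ℕ}
    (hv : v ∉ m.delV) : N'.inDeg v = N.inDeg v := by
  have h := Finset.card_filter_sdiff_union_add (·.2 = v) hm.delA_subset (hm.disjoint_A_insA hN)
  rw [(hm.card_filter_delA_eq hN hv).2] at h
  simp only [inDeg, hr.2]
  omega

lemma Result.binaryDegrees (hN : N.BinaryDegrees) (hm : m.Applies N) (hr : m.Result N N') :
    N'.BinaryDegrees := by
  intro v hv
  rw [hr.1, Finset.mem_sdiff] at hv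
  rw [hr.outDeg_eq hN hm hv.2, hr.inDeg_eq hN hm hv.2]
  exact hN v hv.1

lemma Result.mem_A (hr : m.Result N N') {e : ℕ × ℕ} (he : e ∈ N.A) (h₁ : e.1 ∉ m.delV)
    (h₂ : e.2 ∉ m.delV) : e ∈ N'.A := by
  rw [hr.2]
  exact Finset.mem_union_left _
    (Finset.mem_sdiff.2 ⟨he, fun hd => (m.fst_mem_delV_or_snd_mem_delV hd).elim h₁ h₂⟩)

lemma Result.isLeaf (hN : N.BinaryDegrees) (hm : m.Applies N) (hr : m.Result N N') {v : ℕ}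
    (h : N.IsLeaf v) (hv : v ∉ m.delV) : N'.IsLeaf v :=
  ⟨hr.1 ▸ Finset.mem_sdiff.2 ⟨h.1, hv⟩, (hr.outDeg_eq hN hm hv).trans h.2⟩

lemma Result.unique {N₂ : Digraph'} (h₁ : m.Result N N₁) (h₂ : m.Result N N₂) : N₁ = N₂ :=
  Digraph'.ext (h₁.1.trans h₂.1.symm) (h₁.2.trans h₂.2.symm)

lemma Applies.endpoints_notMem_delV (hN : N.BinaryDegrees) (hm : m.Applies N) :
    ∀ e ∈ N.A \ m.delA ∪ m.insA, e.1 ∉ m.delV ∧ e.2 ∉ m.delV := by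
  have hi := hm.isolated hN
  cases m with
  | reduce a b p u =>
    obtain ⟨hab, ha, hb, hup, hpa, hpb⟩ := hm
    obtain ⟨la, lb, pa, pb, cp, pp⟩ := hi
    simp only [delA, insA, delV, Finset.mem_union, Finset.mem_sdiff, Finset.mem_insert,
      Finset.mem_singleton, Prod.forall, Prod.mk.injEq]
    grind
  | cut a b pa pb ua q =>
    obtain ⟨hab, ha, hb, hpp, hup, hpa, hqp, hpb, hin, hq⟩ := hm
    obtain ⟨la, lb, pa', pb', cpa, ppa, cpb, ppb⟩ := hi
    simp only [delA, insA, delV, Finset.mem_union, Finset.mem_sdiff, Finset.mem_insert,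
      Finset.mem_singleton, Prod.forall, Prod.mk.injEq]
    grind

lemma Applies.mem_V_of_mem_insA (hm : m.Applies N) :
    ∀ e ∈ m.insA, e.1 ∈ N.V ∧ e.2 ∈ N.V := by
  cases m with
  | reduce a b p u =>
    obtain ⟨-, -, -, hup, hpa, -⟩ := hm
    simp [insA, (N.mem_V _ hup).1, (N.mem_V _ hpa).2]
  | cut a b pa pb ua q =>
    obtain ⟨-, -, -, -, hup, hpa, hqp, hpb, -, -⟩ := hm
    simp [insA, (N.mem_V _ hup).1, (N.mem_V _ hpa).2, (N.mem_V _ hqp).1, (N.mem_V _ hpb).2]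

lemma Applies.exists_result (hN : N.BinaryDegrees) (hm : m.Applies N) : ∃ N', m.Result N N' := by
  refine ⟨⟨N.V \ m.delV, N.A \ m.delA ∪ m.insA, fun e he => ?_⟩, rfl, rfl⟩
  have hV : e.1 ∈ N.V ∧ e.2 ∈ N.V := by
    rcases Finset.mem_union.1 he with he | he
    · exact N.mem_V e (Finset.mem_sdiff.1 he).1
    · exact hm.mem_V_of_mem_insA e he
  have hdel := hm.endpoints_notMem_delV hN e he
  exact ⟨Finset.mem_sdiff.2 ⟨hV.1, hdel.1⟩, Finset.mem_sdiff.2 ⟨hV.2, hdel.2⟩⟩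

lemma result_reduce_iff {a b p u : ℕ} :
    (reduce a b p u).Result N N' ↔ N'.V = (N.V.erase b).erase p ∧
      N'.A = insert (u, a) (((N.A.erase (u, p)).erase (p, a)).erase (p, b)) := by
  have hV : (N.V.erase b).erase p = N.V \ {b, p} := by
    ext
    simp
    tauto
  have hA : insert (u, a) (((N.A.erase (u, p)).erase (p, a)).erase (p, b)) =
      N.A \ {(u, p), (p, a), (p, b)} ∪ {(u, a)} := by
    ext
    simp
    tauto
  rw [hV, hA]
  rfl

lemma result_cut_iff {a b pa pb ua q : ℕ} :
    (cut a b pa pb ua q).Result N N' ↔ N'.V = (N.V.erase pa).erase pb ∧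
      N'.A = insert (ua, a) (insert (q, b)
        (((((N.A.erase (pa, pb)).erase (ua, pa)).erase (pa, a)).erase (q, pb)).erase (pb, b))) := by
  have hV : (N.V.erase pa).erase pb = N.V \ {pa, pb} := by
    ext
    simp
    tauto
  have hA : insert (ua, a) (insert (q, b)
        (((((N.A.erase (pa, pb)).erase (ua, pa)).erase (pa, a)).erase (q, pb)).erase (pb, b))) =
      N.A \ {(pa, pb), (ua, pa), (pa, a), (q, pb), (pb, b)} ∪ {(ua, a), (q, b)} := by
    ext
    simp
    tauto
  rw [hV, hA]
  rfl

lemma Applies.cherryStep (hm : m.Applies N) (hr : m.Result N N') : CherryStep N N' := by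
  cases m with
  | reduce a b p u =>
    obtain ⟨hab, ha, hb, hup, hpa, hpb⟩ := hm
    exact ⟨a, b, Or.inl ⟨⟨hab, ha, hb, p, hpa, hpb⟩, p, hpa, hpb,
      Or.inr ⟨u, hup, result_reduce_iff.1 hr⟩⟩⟩
  | cut a b pa pb ua q =>
    obtain ⟨hab, ha, hb, hpp, hup, hpa, hqp, hpb, hin, hq⟩ := hm
    exact ⟨a, b, Or.inr ⟨⟨hab, ha, hb, pa, pb, hpa, hpb, hin, hpp⟩, pa, pb, ua, q, hpa, hpb,
      hin, hpp, hup, hqp, hq, result_cut_iff.1 hr⟩⟩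

lemma Applies.of_result (hN : N.BinaryDegrees) (hm : m.Applies N) (hn : n.Applies N)
    (hr : n.Result N N₁) (hmn : Disjoint m.support n.delV) : m.Applies N₁ := by
  have hout : ∀ v ∈ m.support, v ∉ n.delV := fun _ hv => Finset.disjoint_left.1 hmn hv
  have arc : ∀ e ∈ m.delA, e ∈ N₁.A := fun e he =>
    hr.mem_A (hm.delA_subset he) (hout _ (m.mem_support_of_mem_delA he).1)
      (hout _ (m.mem_support_of_mem_delA he).2)
  cases m with
  | reduce a b p u =>
    obtain ⟨hab, ha, hb, -, -, -⟩ := hm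
    simp only [support, delA, Finset.mem_insert, Finset.mem_singleton, forall_eq_or_imp,
      forall_eq] at hout arc
    exact ⟨hab, hr.isLeaf hN hn ha hout.1, hr.isLeaf hN hn hb hout.2.1, arc.1, arc.2.1,
      arc.2.2⟩
  | cut a b pa pb ua q =>
    obtain ⟨hab, ha, hb, -, -, -, -, -, hin, hq⟩ := hm
    simp only [support, delA, Finset.mem_insert, Finset.mem_singleton, forall_eq_or_imp,
      forall_eq] at hout arc
    exact ⟨hab, hr.isLeaf hN hn ha hout.1, hr.isLeaf hN hn hb hout.2.1, arc.1, arc.2.1,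
      arc.2.2.1, arc.2.2.2.1, arc.2.2.2.2, (hr.inDeg_eq hN hn hout.2.2.2.1).trans hin, hq⟩

lemma Result.comm {M : Digraph'} (h : m.Independent n) (h₁ : n.Result N N₁)
    (hM : m.Result N₁ M) (h' : m.Result N N') : n.Result N' M := by
  constructor
  · rw [hM.1, h₁.1, h'.1, sdiff_sdiff_comm]
  · rw [hM.2, h₁.2, h'.2]
    ext e
    have hm_ins : e ∈ m.insA → e ∉ n.delA :=
      fun he => Finset.disjoint_left.1 (disjoint_insA_delA h.1) he
    have hn_ins : e ∈ n.insA → e ∉ m.delA :=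
      fun he => Finset.disjoint_left.1 (disjoint_insA_delA h.2) he
    simp only [Finset.mem_union, Finset.mem_sdiff]
    tauto

lemma Applies.exists_result_of_independent (hN : N.BinaryDegrees) (hm : m.Applies N)
    (hn : n.Applies N) (h : m.Independent n) (h' : m.Result N N') (h₁ : n.Result N N₁) :
    ∃ M, m.Applies N₁ ∧ m.Result N₁ M ∧ CherryStep N' M := by
  have hm₁ := hm.of_result hN hn h₁ h.1
  obtain ⟨M, hM⟩ := hm₁.exists_result (h₁.binaryDegrees hN hn)
  exact ⟨M, hm₁, hM, (hn.of_result hN hm h' h.2).cherryStep (h₁.comm h hM h')⟩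

lemma Result.eq_map_swap (hN : N.BinaryDegrees) {a b p u : ℕ}
    (hm : (reduce a b p u).Applies N) (h' : (reduce a b p u).Result N N')
    (h₁ : (reduce b a p u).Result N N₁) : N' = N₁.map (Equiv.swap a b) := by
  obtain ⟨la, lb, pa, pb, cp, pp⟩ := hm.isolated hN
  obtain ⟨hab, ⟨haV, -⟩, ⟨hbV, -⟩, hup, hpa, hpb⟩ := hm
  refine Digraph'.ext ?_ ?_
  · ext v
    simp only [h'.1, h₁.1, map_V, Finset.mem_map_equiv, Equiv.symm_swap, Equiv.swap_apply_def,
      delV, Finset.mem_sdiff, Finset.mem_insert, Finset.mem_singleton]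
    split_ifs <;> grind
  · ext ⟨x, y⟩
    simp only [h'.2, h₁.2, map_A, Finset.mem_map_equiv, Equiv.prodCongr_symm, Equiv.symm_swap,
      Equiv.prodCongr_apply, Prod.map, Equiv.swap_apply_def, delA, insA, Finset.mem_union,
      Finset.mem_sdiff, Finset.mem_insert, Finset.mem_singleton, Prod.mk.injEq]
    split_ifs <;> grind

/-- Cutting either of two reticulated cherries with the same reticulation leaf `b` turns the other
one into an ordinary cherry, and reducing `b` in it gives the same network. -/
lemma Applies.exists_reduce_of_cut_cut (hN : N.BinaryDegrees) {a b c pa pb ua uc q : ℕ}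
    (hac : a ≠ c) (hm : (cut a b pa pb ua q).Applies N) (hn : (cut c b q pb uc pa).Applies N)
    (h' : (cut a b pa pb ua q).Result N N') (h₁ : (cut c b q pb uc pa).Result N N₁) :
    ∃ M, (reduce a b pa ua).Applies N₁ ∧ (reduce a b pa ua).Result N₁ M ∧ CherryStep N' M := by
  obtain ⟨la, lb, pa', pb', cpa, ppa, cpb, ppb⟩ := hm.isolated hN
  obtain ⟨lc, -, pc', -, cq, pq, -, -⟩ := hn.isolated hN
  have ⟨hab, ha, hb, _, hup, hpa, hqp, hpb, hin, hq⟩ := hm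
  have ⟨hcb, hc, _, _, huq, hqc, _, _, _, _⟩ := hn
  have hk : (reduce a b pa ua).Applies N₁ := by
    have : a ∉ ({q, pb} : Finset ℕ) ∧ b ∉ ({q, pb} : Finset ℕ) ∧ ua ∉ ({q, pb} : Finset ℕ) ∧
        pa ∉ ({q, pb} : Finset ℕ) := by
      simp only [Finset.mem_insert, Finset.mem_singleton, not_or]
      and_intros <;> grind
    exact ⟨hab, h₁.isLeaf hN hn ha this.1, h₁.isLeaf hN hn hb this.2.1,
      h₁.mem_A hup this.2.2.1 this.2.2.2, h₁.mem_A hpa this.2.2.2 this.1, by simp [h₁.2, insA]⟩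
  have hl : (reduce c b q uc).Applies N' := by
    have : c ∉ ({pa, pb} : Finset ℕ) ∧ b ∉ ({pa, pb} : Finset ℕ) ∧ uc ∉ ({pa, pb} : Finset ℕ) ∧
        q ∉ ({pa, pb} : Finset ℕ) := by
      simp only [Finset.mem_insert, Finset.mem_singleton, not_or]
      and_intros <;> grind
    exact ⟨hcb, h'.isLeaf hN hm hc this.1, h'.isLeaf hN hm hb this.2.1,
      h'.mem_A huq this.2.2.1 this.2.2.2, h'.mem_A hqc this.2.2.2 this.1, by simp [h'.2, insA]⟩
  obtain ⟨M, hM⟩ := hk.exists_result (h₁.binaryDegrees hN hn)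
  refine ⟨M, hk, hM, hl.cherryStep ⟨?_, ?_⟩⟩
  · ext v
    simp only [hM.1, h₁.1, h'.1, delV, Finset.mem_sdiff, Finset.mem_insert, Finset.mem_singleton]
    tauto
  · ext ⟨x, y⟩
    simp only [hM.2, h₁.2, h'.2, delA, insA, Finset.mem_union, Finset.mem_sdiff,
      Finset.mem_insert, Finset.mem_singleton, Prod.mk.injEq]
    grind

lemma Applies.reduce_reduce_cases (hN : N.BinaryDegrees) {a b p u c d p' u' : ℕ}
    (hm : (reduce a b p u).Applies N) (hn : (reduce c d p' u').Applies N) :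
    (a = c ∧ b = d ∨ a = d ∧ b = c) ∧ p = p' ∧ u = u' ∨
      (reduce a b p u).Independent (reduce c d p' u') := by
  obtain ⟨la, lb, pa, pb, cp, pp⟩ := hm.isolated hN
  obtain ⟨lc, ld, pc, pd, cp', pp'⟩ := hn.isolated hN
  obtain ⟨hab, ha, hb, hup, hpa, hpb⟩ := hm
  obtain ⟨hcd, hc, hd, hup', hpc, hpd⟩ := hn
  by_cases h : a = c ∨ a = d ∨ b = c ∨ b = d
  · left
    and_intros <;> grind
  · right
    simp only [Independent, support, delV, Finset.disjoint_insert_left,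
      Finset.disjoint_singleton_left, Finset.mem_insert, Finset.mem_singleton, not_or]
    and_intros <;> grind

lemma Applies.reduce_cut_independent (hN : N.BinaryDegrees) {a b p u c d pc pd uc r : ℕ}
    (hm : (reduce a b p u).Applies N) (hn : (cut c d pc pd uc r).Applies N) :
    (reduce a b p u).Independent (cut c d pc pd uc r) := by
  obtain ⟨la, lb, pa, pb, cp, pp⟩ := hm.isolated hN
  obtain ⟨lc, ld, pc', pd', cpc, ppc, cpd, ppd⟩ := hn.isolated hN
  obtain ⟨hab, ha, hb, hup, hpa, hpb⟩ := hm
  obtain ⟨hcd, hc, hd, hpp', hup', hpc, hrp, hpd, hin', hr⟩ := hn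
  simp only [Independent, support, delV, Finset.disjoint_insert_left,
    Finset.disjoint_singleton_left, Finset.mem_insert, Finset.mem_singleton, not_or]
  and_intros <;> grind

lemma Applies.cut_cut_cases (hN : N.BinaryDegrees) {a b pa pb ua q c d pc pd uc r : ℕ}
    (hm : (cut a b pa pb ua q).Applies N) (hn : (cut c d pc pd uc r).Applies N) :
    a = c ∧ b = d ∧ pa = pc ∧ pb = pd ∧ ua = uc ∧ q = r ∨
      a ≠ c ∧ b = d ∧ pb = pd ∧ pc = q ∧ r = pa ∨
      (cut a b pa pb ua q).Independent (cut c d pc pd uc r) := by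
  obtain ⟨la, lb, pa', pb', cpa, ppa, cpb, ppb⟩ := hm.isolated hN
  obtain ⟨lc, ld, pc', pd', cpc, ppc, cpd, ppd⟩ := hn.isolated hN
  obtain ⟨hab, ha, hb, hpp, hup, hpa, hqp, hpb, hin, hq⟩ := hm
  obtain ⟨hcd, hc, hd, hpp', hup', hpc, hrp, hpd, hin', hr⟩ := hn
  by_cases hac : a = c
  · left
    and_intros <;> grind
  by_cases hbd : b = d
  · right; left
    and_intros <;> grind
  right; right
  simp only [Independent, support, delV, Finset.disjoint_insert_left,
    Finset.disjoint_singleton_left, Finset.mem_insert, Finset.mem_singleton, not_or]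
  and_intros <;> grind

lemma Applies.local_confluence (hN : N.BinaryDegrees) (hm : m.Applies N) (hn : n.Applies N)
    (h' : m.Result N N') (h₁ : n.Result N N₁) :
    (∃ σ : ℕ ≃ ℕ, N' = N₁.map σ) ∨
      ∃ (k : Move) (M : Digraph'), k.Applies N₁ ∧ k.Result N₁ M ∧ CherryStep N' M := by
  have commute (h : m.Independent n) :
      ∃ (k : Move) (M : Digraph'), k.Applies N₁ ∧ k.Result N₁ M ∧ CherryStep N' M :=
    ⟨m, hm.exists_result_of_independent hN hn h h' h₁⟩
  cases m <;> cases n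
  case reduce.reduce a b p u c d p' u' =>
    rcases hm.reduce_reduce_cases hN hn with ⟨⟨rfl, rfl⟩ | ⟨rfl, rfl⟩, rfl, rfl⟩ | h
    · exact Or.inl ⟨Equiv.refl ℕ, by rw [map_refl]; exact h'.unique h₁⟩
    · exact Or.inl ⟨Equiv.swap a b, h'.eq_map_swap hN hm h₁⟩
    · exact Or.inr <| commute h
  case reduce.cut => exact Or.inr <| commute (hm.reduce_cut_independent hN hn)
  case cut.reduce => exact Or.inr <| commute (hn.reduce_cut_independent hN hm).symm
  case cut.cut a b pa pb ua q c d pc pd uc r =>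
    rcases hm.cut_cut_cases hN hn with ⟨rfl, rfl, rfl, rfl, rfl, rfl⟩ |
      ⟨hac, rfl, rfl, rfl, rfl⟩ | h
    · exact Or.inl ⟨Equiv.refl ℕ, by rw [map_refl]; exact h'.unique h₁⟩
    · exact Or.inr ⟨_, hm.exists_reduce_of_cut_cut hN hac hn h' h₁⟩
    · exact Or.inr <| commute h

end Move

open Move

lemma IsRootCherry.of_result {m : Move} {N' : Digraph'} (hN : N.BinaryDegrees) {c d r : ℕ}
    (hc : N.IsRootCherry c d r) (hm : m.Applies N) (hr : m.Result N N') :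
    N'.IsRootCherry c d r := by
  obtain ⟨hcd, hc, hd, hrc, hrd, hroot⟩ := hc
  have hout : c ∉ m.delV ∧ d ∉ m.delV ∧ r ∉ m.delV := by
    have hi := hm.isolated hN
    have lc := outDeg_eq_zero_iff.1 hc.2
    have ld := outDeg_eq_zero_iff.1 hd.2
    have lr := inDeg_eq_zero_iff.1 hroot
    cases m with
    | reduce a b p u =>
      obtain ⟨la, lb, pa, pb, cp, pp⟩ := hi
      obtain ⟨hab, ha, hb, hup, hpa, hpb⟩ := hm
      simp only [delV, Finset.mem_insert, Finset.mem_singleton, not_or]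
      and_intros <;> grind
    | cut a b pa pb ua q =>
      obtain ⟨la, lb, pa', pb', cpa, ppa, cpb, ppb⟩ := hi
      obtain ⟨hab, ha, hb, hpp, hup, hpa, hqp, hpb, hin, hq⟩ := hm
      simp only [delV, Finset.mem_insert, Finset.mem_singleton, not_or]
      and_intros <;> grind
  exact ⟨hcd, hr.isLeaf hN hm hc hout.1, hr.isLeaf hN hm hd hout.2.1,
    hr.mem_A hrc hout.2.2 hout.1, hr.mem_A hrd hout.2.2 hout.2.1,
    (hr.inDeg_eq hN hm hout.2.2).trans hroot⟩

lemma reduceCherry_or_cutRetCherry_cases {N' : Digraph'} {a b : ℕ}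
    (h : ReduceCherry N N' a b ∨ CutRetCherry N N' a b) :
    (∃ p, N.IsRootCherry a b p) ∧ IsSingle N' ∨ ∃ m : Move, m.Applies N ∧ m.Result N N' := by
  rcases h with ⟨⟨hab, ha, hb, -⟩, p, hpa, hpb, ⟨hroot, hV, hA⟩ | ⟨u, hup, hr⟩⟩ |
    ⟨⟨hab, ha, hb, -⟩, pa, pb, ua, q, hpa, hpb, hin, hpp, hup, hqp, hq, hr⟩
  · exact Or.inl ⟨⟨p, hab, ha, hb, hpa, hpb, hroot⟩, a, hV, hA⟩
  · exact Or.inr ⟨reduce a b p u, ⟨hab, ha, hb, hup, hpa, hpb⟩, result_reduce_iff.2 hr⟩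
  · exact Or.inr ⟨cut a b pa pb ua q, ⟨hab, ha, hb, hpp, hup, hpa, hqp, hpb, hin, hq⟩,
      result_cut_iff.2 hr⟩

theorem Move.Result.isOrchard {m : Move} {N' : Digraph'} (hr : m.Result N N')
    (hN : N.BinaryDegrees) (hm : m.Applies N) (h : N.IsOrchard) : N'.IsOrchard := by
  obtain ⟨F, hNF, hF⟩ := h
  induction hNF using Relation.ReflTransGen.head_induction_on generalizing m N' with
  | refl => exact absurd hF (Applies.not_isSingle hm)
  | head hstep hchain ih =>
    obtain ⟨_, _, hs⟩ := hstep
    rcases reduceCherry_or_cutRetCherry_cases hs with ⟨⟨_, hroot⟩, -⟩ | ⟨n, hn, h₁⟩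
    · exact (hroot.of_result hN hm hr).isOrchard
    rcases Applies.local_confluence hN hm hn hr h₁ with ⟨σ, rfl⟩ | ⟨k, M, hk, hM, hstep'⟩
    · exact IsOrchard.map ⟨_, hchain, hF⟩
    · exact .of_cherryStep hstep' (ih hM (h₁.binaryDegrees hN hn) hk)

end Digraph'

open Digraph'

/-- applying a cherry reduction (reducing a cherry leaf or cutting a
reticulated cherry) to an orchard network yields an orchard network. -/
theorem stmt_12 (N N' : Digraph') (X : Finset ℕ) (a b : ℕ)
    (hnet : N.IsPhylo X ∨ IsSingle N)
    (horch : N.IsOrchard)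
    (hred : ReduceCherry N N' a b ∨ CutRetCherry N N' a b) :
    N'.IsOrchard := by
  rcases reduceCherry_or_cutRetCherry_cases hred with ⟨-, hN'⟩ | ⟨m, hm, hr⟩
  · exact hN'.isOrchard
  · exact hr.isOrchard (hnet.resolve_right hm.not_isSingle).degrees hm horch
end

section
/- Let N be a phylogenetic network on X with |X| ≥ 2 and suppose {a, b} is a reticulated cherry of N with b the reticulation leaf. Let N' be obtained from N by cutting {a, b}. Then for every leaf x ∈ X − {b} and every non-leaf vertex v of N' , the number of directed paths in N' from v to x equals the number of directed paths in N from (the corresponding vertex) v to x; and for every non-leaf vertex v of N', the number of directed paths in N' from v to b equals the number of paths in N from v to b minus the number of paths in N from v to a. -/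
open Digraph'

/-!
Cutting `{a, b}` only changes arcs whose heads lie in `S = {pa, pb, a, b}`, and `S` is closed under
taking children in `N`. Hence a path ending outside `S` never meets `S`, and it is a path of `N`
exactly when it is a path of `N'`. The counts to `a` and `b` follow by peeling off the last arc:
in `N` the paths to `a` are the paths to `ua` extended through `pa`, and the paths to `b` are the
paths to `pa` or to `q` extended through `pb`; in `N'` the paths to `a` and to `b` are the paths
to `ua` and to `q` extended by one of the two new arcs.
-/

theorem Finset.eq_or_eq_of_card_le_two {α : Type*} {s : Finset α} (hs : s.card ≤ 2) {a b c : α}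
    (ha : a ∈ s) (hb : b ∈ s) (hab : a ≠ b) (hc : c ∈ s) : c = a ∨ c = b := by
  by_contra! h
  exact (Finset.two_lt_card.2 ⟨a, ha, b, hb, c, hc, hab, h.1.symm, h.2.symm⟩).not_ge hs

namespace List

theorem IsChain.imp_of_closed {α : Type*} {R R' : α → α → Prop} {S : Set α}
    (hS : ∀ u c, R u c → u ∈ S → c ∈ S) (hRR' : ∀ u c, c ∉ S → R u c → R' u c)
    {l : List α} (hl : l.IsChain R) (hw : ∀ w ∈ l.getLast?, w ∉ S) : l.IsChain R' :=
  have hnot : ∀ y ∈ l, y ∉ S := hl.backwards_induction _ _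
    (fun x y hxy hy hx => hy (hS x y hxy hx)) fun hne => hw _ (getLast?_eq_some_getLast hne)
  hl.imp_of_mem_imp fun _ y _ hy => hRR' _ y (hnot y hy)

theorem IsChain.iff_of_closed {α : Type*} {R R' : α → α → Prop} {S : Set α}
    (hS : ∀ u c, R u c → u ∈ S → c ∈ S) (hRR' : ∀ u c, c ∉ S → (R u c ↔ R' u c))
    {l : List α} (hw : ∀ w ∈ l.getLast?, w ∉ S) : l.IsChain R ↔ l.IsChain R' := by
  have hS' : ∀ u c, R' u c → u ∈ S → c ∈ S := fun u c h hu => by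
    by_contra hc
    exact hc (hS u c ((hRR' u c hc).2 h) hu)
  exact ⟨fun hl => hl.imp_of_closed hS (fun u c hc => (hRR' u c hc).1) hw,
    fun hl => hl.imp_of_closed hS' (fun u c hc => (hRR' u c hc).2) hw⟩

theorem finite_setOf_nodup_subset {α : Type*} [DecidableEq α] (s : Finset α) :
    {l : List α | l.Nodup ∧ ∀ x ∈ l, x ∈ s}.Finite := by
  refine (s.powerset.biUnion fun t => (Multiset.lists t.val).toFinset).finite_toSet.subset ?_
  rintro l ⟨hnd, hs⟩
  simp only [Finset.coe_biUnion, Finset.coe_powerset, Set.mem_iUnion, Set.mem_preimage,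
    Set.mem_powerset_iff, Finset.mem_coe, Multiset.mem_toFinset, Multiset.mem_lists_iff]
  exact ⟨l.toFinset, fun x hx => hs x (List.mem_toFinset.1 hx),
    by simp [List.toFinset_val, hnd.dedup]⟩

end List

namespace Digraph'

variable {M M' : Digraph'}

def paths (M : Digraph') (u x : ℕ) : Set (List ℕ) :=
  {l | l.head? = some u ∧ l.getLast? = some x ∧ l.IsChain fun p q => (p, q) ∈ M.A}

theorem numPaths_eq_ncard_paths (M : Digraph') (u x : ℕ) :
    numPaths M u x = (M.paths u x).ncard := rfl

theorem Acyclic.ne_of_mem (hM : M.Acyclic) {u v : ℕ} (h : (u, v) ∈ M.A) : u ≠ v := by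
  rintro rfl
  exact hM u u h .refl

theorem Acyclic.nodup_of_isChain (hM : M.Acyclic) {l : List ℕ}
    (hl : l.IsChain fun p q => (p, q) ∈ M.A) : l.Nodup :=
  have hl' : l.IsChain (Relation.TransGen fun p q => (p, q) ∈ M.A) := hl.imp fun _ _ => .single
  hl'.pairwise.imp fun {u} _ huv heq => by
    subst heq
    obtain ⟨c, huc, hcu⟩ := Relation.TransGen.head'_iff.mp huv
    exact hM u c huc hcu

theorem Acyclic.finite_paths (hM : M.Acyclic) (u x : ℕ) : (M.paths u x).Finite := by
  refine (List.finite_setOf_nodup_subset (insert u M.V)).subset ?_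
  rintro l ⟨hu, -, hl⟩
  refine ⟨hM.nodup_of_isChain hl, hl.induction _ _ (fun _ c hpc _ => ?_) fun hne => ?_⟩
  · exact Finset.mem_insert_of_mem (M.mem_V _ hpc).2
  · rw [List.head?_eq_some_head hne, Option.some_inj] at hu
    simp [hu]

theorem paths_eq_biUnion {v x : ℕ} (hvx : v ≠ x) :
    M.paths v x = ⋃ p ∈ {p | (p, x) ∈ M.A}, (· ++ [x]) '' M.paths v p := by
  ext l
  simp only [paths, Set.mem_iUnion, Set.mem_image, Set.mem_ofPred_eq, exists_prop]
  constructor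
  · rintro ⟨hv, hx, hl⟩
    obtain ⟨m, y, rfl⟩ := (List.eq_nil_or_concat' l).resolve_left (by rintro rfl; simp at hv)
    obtain rfl : y = x := by simpa using hx
    obtain ⟨c, m, rfl⟩ : ∃ c m', m = c :: m' := by
      cases m with
      | nil => exact absurd (by simpa using hv.symm) hvx
      | cons c m => exact ⟨c, m, rfl⟩
    have hp := List.getLast?_eq_some_getLast (List.cons_ne_nil c m)
    obtain ⟨hm, -, hpy⟩ := List.isChain_append.1 hl
    exact ⟨_, hpy _ hp y rfl, c :: m, ⟨by simpa using hv, hp, hm⟩, rfl⟩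
  · rintro ⟨p, hpx, m, ⟨hv, hp, hm⟩, rfl⟩
    refine ⟨by simp [List.head?_append, hv], by simp,
      List.isChain_append.2 ⟨hm, by simp, ?_⟩⟩
    simp_all

theorem numPaths_eq_of_forall_mem_A_iff {v x p : ℕ} (hvx : v ≠ x)
    (hp : ∀ z, (z, x) ∈ M.A ↔ z = p) : numPaths M v x = numPaths M v p := by
  rw [numPaths_eq_ncard_paths, paths_eq_biUnion hvx,
    show {z | (z, x) ∈ M.A} = {p} from Set.ext hp, Set.biUnion_singleton,
    Set.ncard_image_of_injective _ (List.append_left_injective [x]), numPaths_eq_ncard_paths]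

theorem disjoint_paths {v p r : ℕ} (hpr : p ≠ r) : Disjoint (M.paths v p) (M.paths v r) :=
  Set.disjoint_left.2 fun _ ⟨_, hp, _⟩ ⟨_, hr, _⟩ =>
    hpr (Option.some_inj.1 (hp.symm.trans hr))

theorem Acyclic.numPaths_eq_add (hM : M.Acyclic) {v x p r : ℕ} (hvx : v ≠ x) (hpr : p ≠ r)
    (hx : ∀ z, (z, x) ∈ M.A ↔ z = p ∨ z = r) :
    numPaths M v x = numPaths M v p + numPaths M v r := by
  have happ := List.append_left_injective [x]
  rw [numPaths_eq_ncard_paths, paths_eq_biUnion hvx,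
    show {z | (z, x) ∈ M.A} = {p, r} from Set.ext hx, Set.biUnion_insert, Set.biUnion_singleton,
    Set.ncard_union_eq ((Set.disjoint_image_iff happ).2 (disjoint_paths hpr))
      ((hM.finite_paths v p).image _) ((hM.finite_paths v r).image _),
    Set.ncard_image_of_injective _ happ, Set.ncard_image_of_injective _ happ]
  rfl

theorem numPaths_eq_of_closed {S : Set ℕ} (hS : ∀ u c, (u, c) ∈ M.A → u ∈ S → c ∈ S)
    (hA : ∀ u c, c ∉ S → ((u, c) ∈ M.A ↔ (u, c) ∈ M'.A)) {v w : ℕ} (hw : w ∉ S) :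
    numPaths M v w = numPaths M' v w := by
  rw [numPaths_eq_ncard_paths, numPaths_eq_ncard_paths]
  congr 1
  ext l
  refine and_congr_right fun _ => and_congr_right fun hl => List.IsChain.iff_of_closed hS hA ?_
  simpa [hl] using hw

theorem mem_A_iff_of_inDeg_le_one {x p : ℕ} (h : M.inDeg x ≤ 1) (hp : (p, x) ∈ M.A)
    (z : ℕ) : (z, x) ∈ M.A ↔ z = p := by
  refine ⟨fun hz => ?_, by rintro rfl; exact hp⟩
  simpa using Finset.card_le_one.1 h (z, x) (by simp [hz]) (p, x) (by simp [hp])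

theorem mem_A_iff_of_inDeg_le_two {x p r : ℕ} (h : M.inDeg x ≤ 2) (hp : (p, x) ∈ M.A)
    (hr : (r, x) ∈ M.A) (hpr : p ≠ r) (z : ℕ) : (z, x) ∈ M.A ↔ z = p ∨ z = r := by
  refine ⟨fun hz => ?_, by rintro (rfl | rfl) <;> assumption⟩
  simpa using Finset.eq_or_eq_of_card_le_two h (a := (p, x)) (b := (r, x)) (c := (z, x))
    (by simp [hp]) (by simp [hr]) (by simp [hpr]) (by simp [hz])

theorem mem_A_iff_of_outDeg_le_one {u c : ℕ} (h : M.outDeg u ≤ 1) (hc : (u, c) ∈ M.A)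
    (d : ℕ) : (u, d) ∈ M.A ↔ d = c := by
  refine ⟨fun hd => ?_, by rintro rfl; exact hc⟩
  simpa using Finset.card_le_one.1 h (u, d) (by simp [hd]) (u, c) (by simp [hc])

theorem mem_A_iff_of_outDeg_le_two {u c d : ℕ} (h : M.outDeg u ≤ 2) (hc : (u, c) ∈ M.A)
    (hd : (u, d) ∈ M.A) (hcd : c ≠ d) (e : ℕ) : (u, e) ∈ M.A ↔ e = c ∨ e = d := by
  refine ⟨fun he => ?_, by rintro (rfl | rfl) <;> assumption⟩
  simpa using Finset.eq_or_eq_of_card_le_two h (a := (u, c)) (b := (u, d)) (c := (u, e))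
    (by simp [hc]) (by simp [hd]) (by simp [hcd]) (by simp [he])

theorem outDeg_ne_zero {u c : ℕ} (h : (u, c) ∈ M.A) : M.outDeg u ≠ 0 :=
  Finset.card_ne_zero.2 ⟨(u, c), by simp [h]⟩

theorem two_le_outDeg_s17 {u c d : ℕ} (hc : (u, c) ∈ M.A) (hd : (u, d) ∈ M.A) (hcd : c ≠ d) :
    2 ≤ M.outDeg u :=
  Finset.one_lt_card.2 ⟨(u, c), by simp [hc], (u, d), by simp [hd], by simp [hcd]⟩

namespace IsPhylo

variable {N : Digraph'} {X : Finset ℕ}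

theorem inDeg_le_one (h : N.IsPhylo X) {v : ℕ} (hv : v ∈ N.V) (hv1 : N.outDeg v ≠ 1) :
    N.inDeg v ≤ 1 := by
  rcases h.degrees v hv with h' | h' | h' | h' <;> omega

theorem outDeg_le_two (h : N.IsPhylo X) {v : ℕ} (hv : v ∈ N.V) : N.outDeg v ≤ 2 := by
  rcases h.degrees v hv with h' | h' | h' | h' <;> omega

theorem outDeg_eq_one_of_inDeg_eq_two (h : N.IsPhylo X) {v : ℕ} (hv : v ∈ N.V)
    (hv2 : N.inDeg v = 2) : N.outDeg v = 1 := by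
  rcases h.degrees v hv with h' | h' | h' | h' <;> omega

theorem mem_of_isLeaf (h : N.IsPhylo X) {v : ℕ} (hv : N.IsLeaf v) : v ∈ X :=
  (h.leafSet v hv.1).1 hv.2

theorem notMem_of_mem_A (h : N.IsPhylo X) {u c : ℕ} (hu : (u, c) ∈ N.A) : u ∉ X :=
  fun hX => outDeg_ne_zero hu ((h.leafSet u (N.mem_V _ hu).1).2 hX)

end IsPhylo

/-- The neighbourhood of a cut reticulated cherry `{a, b}`: `pa` and `pb` are the parents of `a`
and `b`, `ua` is the parent of `pa` and `q` the other parent of the reticulation `pb`. -/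
structure RetCherryCut (N N' : Digraph') (a b pa pb ua q : ℕ) : Prop where
  acyclic : N.Acyclic
  parent_a : ∀ z, (z, a) ∈ N.A ↔ z = pa
  parent_b : ∀ z, (z, b) ∈ N.A ↔ z = pb
  parent_pa : ∀ z, (z, pa) ∈ N.A ↔ z = ua
  parent_pb : ∀ z, (z, pb) ∈ N.A ↔ z = pa ∨ z = q
  q_ne_pa : q ≠ pa
  closed : ∀ u c, (u, c) ∈ N.A → u ∈ ({pa, pb, a, b} : Set ℕ) →
    c ∈ ({pa, pb, a, b} : Set ℕ)
  ua_notMem : ua ∉ ({pa, pb, a, b} : Set ℕ)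
  q_notMem : q ∉ ({pa, pb, a, b} : Set ℕ)
  parent_a' : ∀ z, (z, a) ∈ N'.A ↔ z = ua
  parent_b' : ∀ z, (z, b) ∈ N'.A ↔ z = q
  mem_A_iff : ∀ u c, c ∉ ({pa, pb, a, b} : Set ℕ) → ((u, c) ∈ N.A ↔ (u, c) ∈ N'.A)

theorem IsPhylo.retCherryCut {N N' : Digraph'} {X : Finset ℕ} {a b pa pb ua q : ℕ}
    (h : N.IsPhylo X) (hab : a ≠ b) (ha : N.IsLeaf a) (hb : N.IsLeaf b)
    (hpaa : (pa, a) ∈ N.A) (hpbb : (pb, b) ∈ N.A) (hpb : N.inDeg pb = 2)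
    (hpapb : (pa, pb) ∈ N.A) (huapa : (ua, pa) ∈ N.A) (hqpb : (q, pb) ∈ N.A) (hqpa : q ≠ pa)
    (hA' : N'.A = insert (ua, a) (insert (q, b)
      (((((N.A.erase (pa, pb)).erase (ua, pa)).erase (pa, a)).erase (q, pb)).erase (pb, b)))) :
    RetCherryCut N N' a b pa pb ua q := by
  have hpaV : pa ∈ N.V := (N.mem_V _ hpaa).1
  have hpbV : pb ∈ N.V := (N.mem_V _ hpbb).1
  have hleaf : ∀ {v c}, N.IsLeaf v → (v, c) ∉ N.A := fun hv hc => outDeg_ne_zero hc hv.2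
  have hapb : a ≠ pb := by rintro rfl; exact hleaf ha hpbb
  have hbpa : b ≠ pa := by rintro rfl; exact hleaf hb hpaa
  have parent_a := mem_A_iff_of_inDeg_le_one (h.inDeg_le_one ha.1 (by simp [ha.2])) hpaa
  have parent_b := mem_A_iff_of_inDeg_le_one (h.inDeg_le_one hb.1 (by simp [hb.2])) hpbb
  have parent_pa := mem_A_iff_of_inDeg_le_one
    (h.inDeg_le_one hpaV (by have := two_le_outDeg_s17 hpaa hpapb hapb; omega)) huapa
  have child_pa := mem_A_iff_of_outDeg_le_two (h.outDeg_le_two hpaV) hpaa hpapb hapb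
  have child_pb := mem_A_iff_of_outDeg_le_one (h.outDeg_eq_one_of_inDeg_eq_two hpbV hpb).le hpbb
  refine
    { acyclic := h.acyclic
      parent_a, parent_b, parent_pa
      parent_pb := mem_A_iff_of_inDeg_le_two hpb.le hpapb hqpb hqpa.symm
      q_ne_pa := hqpa
      closed := ?_
      ua_notMem := ?_
      q_notMem := ?_
      parent_a' := ?_
      parent_b' := ?_
      mem_A_iff := ?_ }
  · rintro u c huc (rfl | rfl | rfl | rfl)
    · rcases (child_pa c).1 huc with rfl | rfl <;> simp
    · simp [(child_pb c).1 huc]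
    · exact absurd huc (hleaf ha)
    · exact absurd huc (hleaf hb)
  · have hua_pb : ua ≠ pb := by rintro rfl; exact h.acyclic _ _ hpapb (.single huapa)
    have hua_a : ua ≠ a := by rintro rfl; exact hleaf ha huapa
    have hua_b : ua ≠ b := by rintro rfl; exact hleaf hb huapa
    simp [h.acyclic.ne_of_mem huapa, hua_pb, hua_a, hua_b]
  · have hq_a : q ≠ a := by rintro rfl; exact hleaf ha hqpb
    have hq_b : q ≠ b := by rintro rfl; exact hleaf hb hqpb
    simp [hqpa, h.acyclic.ne_of_mem hqpb, hq_a, hq_b]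
  · intro z
    simp [hA', parent_a, hab, (h.acyclic.ne_of_mem hpaa).symm, hapb]
  · intro z
    simp [hA', parent_b, hab.symm, hbpa, (h.acyclic.ne_of_mem hpbb).symm]
  · intro u c hc
    simp only [Set.mem_insert_iff, Set.mem_singleton_iff, not_or] at hc
    simp [hA', hc]

namespace RetCherryCut

variable {N N' : Digraph'} {a b pa pb ua q : ℕ}

theorem numPaths_eq_of_notMem (hc : RetCherryCut N N' a b pa pb ua q) {v w : ℕ}
    (hw : w ∉ ({pa, pb, a, b} : Set ℕ)) : numPaths N' v w = numPaths N v w :=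
  (numPaths_eq_of_closed hc.closed hc.mem_A_iff hw).symm

theorem numPaths_a (hc : RetCherryCut N N' a b pa pb ua q) {v : ℕ} (hva : v ≠ a)
    (hvpa : v ≠ pa) : numPaths N v a = numPaths N v ua := by
  rw [numPaths_eq_of_forall_mem_A_iff hva hc.parent_a,
    numPaths_eq_of_forall_mem_A_iff hvpa hc.parent_pa]

theorem numPaths_b (hc : RetCherryCut N N' a b pa pb ua q) {v : ℕ} (hvb : v ≠ b)
    (hvpb : v ≠ pb) (hvpa : v ≠ pa) : numPaths N v b = numPaths N v ua + numPaths N v q := by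
  rw [numPaths_eq_of_forall_mem_A_iff hvb hc.parent_b,
    hc.acyclic.numPaths_eq_add hvpb hc.q_ne_pa.symm hc.parent_pb,
    numPaths_eq_of_forall_mem_A_iff hvpa hc.parent_pa]

theorem numPaths_cut_a (hc : RetCherryCut N N' a b pa pb ua q) {v : ℕ} (hva : v ≠ a) :
    numPaths N' v a = numPaths N v ua := by
  rw [numPaths_eq_of_forall_mem_A_iff hva hc.parent_a', hc.numPaths_eq_of_notMem hc.ua_notMem]

theorem numPaths_cut_b (hc : RetCherryCut N N' a b pa pb ua q) {v : ℕ} (hvb : v ≠ b) :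
    numPaths N' v b = numPaths N v q := by
  rw [numPaths_eq_of_forall_mem_A_iff hvb hc.parent_b', hc.numPaths_eq_of_notMem hc.q_notMem]

end RetCherryCut

end Digraph'

theorem stmt_17_general (N N' : Digraph') (X : Finset ℕ) (a b : ℕ)
    (h : N.IsPhylo X)
    (hcut : CutRetCherry N N' a b) :
    (∀ x ∈ X, x ≠ b → ∀ v ∈ N'.V, v ∉ X → numPaths N' v x = numPaths N v x) ∧
    (∀ v ∈ N'.V, v ∉ X → numPaths N' v b + numPaths N v a = numPaths N v b) := by
  obtain ⟨⟨hab, ha, hb, -⟩, pa, pb, ua, q, hpaa, hpbb, hpb, hpapb, huapa, hqpb, hqpa, hV',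
    hA'⟩ := hcut
  have hc := h.retCherryCut hab ha hb hpaa hpbb hpb hpapb huapa hqpb hqpa hA'
  have hv_ne : ∀ v ∈ N'.V, v ∉ X → v ≠ pa ∧ v ≠ pb ∧ v ≠ a ∧ v ≠ b := by
    intro v hv hvX
    rw [hV', Finset.mem_erase, Finset.mem_erase] at hv
    exact ⟨hv.2.1, hv.1, (ne_of_mem_of_not_mem (h.mem_of_isLeaf ha) hvX).symm,
      (ne_of_mem_of_not_mem (h.mem_of_isLeaf hb) hvX).symm⟩
  refine ⟨fun x hx hxb v hv hvX => ?_, fun v hv hvX => ?_⟩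
  all_goals obtain ⟨hvpa, hvpb, hva, hvb⟩ := hv_ne v hv hvX
  · by_cases hxa : x = a
    · rw [hxa, hc.numPaths_cut_a hva, hc.numPaths_a hva hvpa]
    · refine hc.numPaths_eq_of_notMem ?_
      have hxpa : x ≠ pa := ne_of_mem_of_not_mem hx (h.notMem_of_mem_A hpaa)
      have hxpb : x ≠ pb := ne_of_mem_of_not_mem hx (h.notMem_of_mem_A hpbb)
      simp [hxpa, hxpb, hxa, hxb]
  · rw [hc.numPaths_cut_b hvb, hc.numPaths_a hva hvpa, hc.numPaths_b hvb hvpb hvpa, add_comm]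

/-- after cutting a reticulated cherry `{a, b}` (with `b` the
reticulation leaf), path counts from each surviving non-leaf vertex to each leaf
`x ≠ b` are unchanged, while the path count to `b` equals the old count to `b`
minus the old count to `a`. -/
theorem stmt_17 (N N' : Digraph') (X : Finset ℕ) (a b : ℕ)
    (h : N.IsPhylo X) (hX : 2 ≤ X.card)
    (hrc : N.IsRetCherry a b)
    (hcut : CutRetCherry N N' a b) :
    (∀ x ∈ X, x ≠ b → ∀ v ∈ N'.V, v ∉ X → numPaths N' v x = numPaths N v x) ∧
    (∀ v ∈ N'.V, v ∉ X → numPaths N' v b + numPaths N v a = numPaths N v b) :=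
  stmt_17_general N N' X a b h hcut
end
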